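/- arXiv:1312.1907 — 5 statements merged into one kernel-verified Lean document; each statement's English description precedes it below -/
import Mathlib

section
/- Let φ ∈ ℓ²(ℤ) be a complex square-summable sequence. Then for every n ∈ ℤ, |φ(n)|² ≤ ( ∑_{k∈ℤ} |φ(k)|² )^{1/2} · ( ∑_{k∈ℤ} |Dφ(k)|² )^{1/2}, where (Dφ)(k) = φ(k+1) − φ(k). -/
open Complex

private lemma tsum_cs (f g : ℤ → ℝ) (hf0 : ∀ k, 0 ≤ f k) (hg0 : ∀ k, 0 ≤ g k)
    (hf : Summable fun k => f k ^ 2) (hg : Summable fun k => g k ^ 2) :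
    ∑' k, f k * g k ≤ Real.sqrt (∑' k, f k ^ 2) * Real.sqrt (∑' k, g k ^ 2) := by
  have hfg : Summable fun k => f k * g k := by
    apply Summable.of_nonneg_of_le (fun k => mul_nonneg (hf0 k) (hg0 k))
      (fun k => ?_) ((hf.add hg).div_const 2)
    have := sq_nonneg (f k - g k)
    nlinarith
  refine Summable.tsum_le_of_sum_le hfg fun s => ?_
  calc ∑ k ∈ s, f k * g k
      ≤ Real.sqrt (∑ k ∈ s, f k ^ 2) * Real.sqrt (∑ k ∈ s, g k ^ 2) :=
        Real.sum_mul_le_sqrt_mul_sqrt s f g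
    _ ≤ Real.sqrt (∑' k, f k ^ 2) * Real.sqrt (∑' k, g k ^ 2) := by
        apply mul_le_mul (Real.sqrt_le_sqrt (Summable.sum_le_tsum s (fun k _ => sq_nonneg _) hf))
          (Real.sqrt_le_sqrt (Summable.sum_le_tsum s (fun k _ => sq_nonneg _) hg))
          (Real.sqrt_nonneg _) (Real.sqrt_nonneg _)

theorem stmt_6
    (φ : ℤ → ℂ) (hφ : Summable fun n : ℤ => ‖φ n‖ ^ 2) (n : ℤ) :
    ‖φ n‖ ^ 2
      ≤ Real.sqrt (∑' k : ℤ, ‖φ k‖ ^ 2) * Real.sqrt (∑' k : ℤ, ‖φ (k + 1) - φ k‖ ^ 2) := by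
  set A := Real.sqrt (∑' k : ℤ, ‖φ k‖ ^ 2) with hA
  set B := Real.sqrt (∑' k : ℤ, ‖φ (k + 1) - φ k‖ ^ 2) with hB
  -- shifted summability
  have hshift : Summable fun k : ℤ => ‖φ (k + 1)‖ ^ 2 :=
    ((Equiv.addRight (1 : ℤ)).summable_iff (f := fun n : ℤ => ‖φ n‖ ^ 2)).2 hφ
  have hshift_eq : (∑' k : ℤ, ‖φ (k + 1)‖ ^ 2) = ∑' k : ℤ, ‖φ k‖ ^ 2 :=
    (Equiv.addRight (1 : ℤ)).tsum_eq (f := fun n : ℤ => ‖φ n‖ ^ 2)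
  -- pointwise bound on the difference of squares
  have key : ∀ k : ℤ, |‖φ (k + 1)‖ ^ 2 - ‖φ k‖ ^ 2|
      ≤ ‖φ (k + 1) - φ k‖ * ‖φ (k + 1)‖ + ‖φ (k + 1) - φ k‖ * ‖φ k‖ := by
    intro k
    have h1 : |‖φ (k + 1)‖ - ‖φ k‖| ≤ ‖φ (k + 1) - φ k‖ := abs_norm_sub_norm_le _ _
    have h2 : ‖φ (k + 1)‖ ^ 2 - ‖φ k‖ ^ 2
        = (‖φ (k + 1)‖ - ‖φ k‖) * (‖φ (k + 1)‖ + ‖φ k‖) := by ring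
    have hnn : (0:ℝ) ≤ ‖φ (k + 1)‖ + ‖φ k‖ :=
      add_nonneg (norm_nonneg _) (norm_nonneg _)
    rw [h2, abs_mul, _root_.abs_of_nonneg hnn]
    nlinarith [abs_nonneg (‖φ (k + 1)‖ - ‖φ k‖), norm_nonneg (φ (k+1)), norm_nonneg (φ k)]
  -- summability of the difference sequence squared
  have hd : Summable fun k : ℤ => ‖φ (k + 1) - φ k‖ ^ 2 := by
    apply Summable.of_nonneg_of_le (fun k => sq_nonneg _) (fun k => ?_)
      (((hshift.add hφ).mul_left 2))
    have h1 := norm_sub_le (φ (k + 1)) (φ k)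
    have h2 : ‖φ (k + 1) - φ k‖ ^ 2 ≤ (‖φ (k + 1)‖ + ‖φ k‖) ^ 2 :=
      pow_le_pow_left₀ (norm_nonneg _) h1 2
    nlinarith [sq_nonneg (‖φ (k + 1)‖ - ‖φ k‖)]
  -- summability of |Δ|
  have hΔ : Summable fun k : ℤ => |‖φ (k + 1)‖ ^ 2 - ‖φ k‖ ^ 2| := by
    apply Summable.of_nonneg_of_le (fun k => abs_nonneg _) (fun k => ?_) (hshift.add hφ)
    calc |‖φ (k + 1)‖ ^ 2 - ‖φ k‖ ^ 2| ≤ |‖φ (k + 1)‖ ^ 2| + |‖φ k‖ ^ 2| := abs_sub _ _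
      _ = ‖φ (k + 1)‖ ^ 2 + ‖φ k‖ ^ 2 := by
          rw [_root_.abs_of_nonneg (sq_nonneg _), _root_.abs_of_nonneg (sq_nonneg _)]
  set S := ∑' k : ℤ, |‖φ (k + 1)‖ ^ 2 - ‖φ k‖ ^ 2| with hS
  -- Step 1 : 2 * ‖φ n‖^2 ≤ S
  have step1 : 2 * ‖φ n‖ ^ 2 ≤ S := by
    -- for each m : ℕ, 2‖φ n‖² ≤ S + ‖φ (n+m)‖² + ‖φ (n-m)‖²
    have hbound : ∀ m : ℕ,
        2 * ‖φ n‖ ^ 2 ≤ S + ‖φ (n + m)‖ ^ 2 + ‖φ (n - m)‖ ^ 2 := by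
      intro m
      -- telescoping forward
      have tf : ∑ j ∈ Finset.range m, (‖φ (n + j + 1)‖ ^ 2 - ‖φ (n + j)‖ ^ 2)
          = ‖φ (n + m)‖ ^ 2 - ‖φ n‖ ^ 2 := by
        have := Finset.sum_range_sub (fun j : ℕ => ‖φ (n + j)‖ ^ 2) m
        simpa [add_assoc] using this
      -- telescoping backward
      have tb : ∑ j ∈ Finset.range m, (‖φ (n - j)‖ ^ 2 - ‖φ (n - j - 1)‖ ^ 2)
          = ‖φ n‖ ^ 2 - ‖φ (n - m)‖ ^ 2 := by
        have := Finset.sum_range_sub' (fun j : ℕ => ‖φ (n - j)‖ ^ 2) m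
        simpa [sub_sub, add_comm] using this
      -- the two sums, bounded by S
      have hfwd : ‖φ n‖ ^ 2 - ‖φ (n + m)‖ ^ 2
          ≤ ∑ j ∈ Finset.range m, |‖φ (n + j + 1)‖ ^ 2 - ‖φ (n + j)‖ ^ 2| := by
        rw [← neg_sub (‖φ (n + m)‖ ^ 2), ← tf, ← Finset.sum_neg_distrib]
        exact Finset.sum_le_sum fun j _ => neg_le_abs _
      have hbwd : ‖φ n‖ ^ 2 - ‖φ (n - m)‖ ^ 2
          ≤ ∑ j ∈ Finset.range m, |‖φ (n - j)‖ ^ 2 - ‖φ (n - j - 1)‖ ^ 2| := by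
        rw [← tb]
        exact Finset.sum_le_sum fun j _ => le_abs_self _
      -- the two index sets inside ℤ are disjoint; their union sum ≤ S
      have hinj1 : Function.Injective (fun j : ℕ => n + (j : ℤ)) := fun a b h => by
        simpa using h
      have hinj2 : Function.Injective (fun j : ℕ => n - (j : ℤ) - 1) := fun a b h => by
        simp only [sub_left_inj, sub_right_inj, Nat.cast_inj] at h; exact h
      set Δ : ℤ → ℝ := fun k => |‖φ (k + 1)‖ ^ 2 - ‖φ k‖ ^ 2| with hΔdef
      have e1 : ∑ j ∈ Finset.range m, |‖φ (n + j + 1)‖ ^ 2 - ‖φ (n + j)‖ ^ 2|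
          = ∑ k ∈ (Finset.range m).image (fun j : ℕ => n + (j : ℤ)), Δ k := by
        rw [Finset.sum_image (fun a _ b _ h => hinj1 h)]
      have e2 : ∑ j ∈ Finset.range m, |‖φ (n - j)‖ ^ 2 - ‖φ (n - j - 1)‖ ^ 2|
          = ∑ k ∈ (Finset.range m).image (fun j : ℕ => n - (j : ℤ) - 1), Δ k := by
        rw [Finset.sum_image (fun a _ b _ h => hinj2 h)]
        congr 1; ext j; congr 1 <;> ring_nf
      have hdisj : Disjoint ((Finset.range m).image (fun j : ℕ => n + (j : ℤ)))
          ((Finset.range m).image (fun j : ℕ => n - (j : ℤ) - 1)) := by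
        rw [Finset.disjoint_left]
        intro k hk1 hk2
        simp only [Finset.mem_image, Finset.mem_range] at hk1 hk2
        obtain ⟨a, _, ha⟩ := hk1
        obtain ⟨b, _, hb⟩ := hk2
        omega
      have hsum2 : ∑ k ∈ ((Finset.range m).image (fun j : ℕ => n + (j : ℤ)))
            ∪ ((Finset.range m).image (fun j : ℕ => n - (j : ℤ) - 1)), Δ k ≤ S := by
        exact Summable.sum_le_tsum _ (fun k _ => abs_nonneg _) hΔ
      rw [Finset.sum_union hdisj] at hsum2
      linarith [add_le_add hfwd hbwd, e1, e2]
    -- take the limit m → ∞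
    have h0 : Filter.Tendsto (fun k : ℤ => ‖φ k‖ ^ 2) Filter.cofinite (nhds 0) :=
      hφ.tendsto_cofinite_zero
    rw [Int.cofinite_eq] at h0
    have htop := h0.mono_left le_sup_right
    have hbot := h0.mono_left le_sup_left
    have h1 : Filter.Tendsto (fun m : ℕ => ‖φ (n + m)‖ ^ 2) Filter.atTop (nhds 0) :=
      htop.comp (Filter.tendsto_atTop_add_const_left _ n
        (tendsto_natCast_atTop_atTop (R := ℤ)) |>.congr (fun m => rfl))
    have h2 : Filter.Tendsto (fun m : ℕ => ‖φ (n - m)‖ ^ 2) Filter.atTop (nhds 0) := by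
      apply hbot.comp
      have : Filter.Tendsto (fun m : ℕ => (m : ℤ)) Filter.atTop Filter.atTop :=
        tendsto_natCast_atTop_atTop (R := ℤ)
      exact Filter.tendsto_atBot_add_const_left _ n (Filter.tendsto_neg_atBot_iff.mpr this)
    have hlim : Filter.Tendsto (fun m : ℕ => S + ‖φ (n + m)‖ ^ 2 + ‖φ (n - m)‖ ^ 2)
        Filter.atTop (nhds (S + 0 + 0)) := (tendsto_const_nhds.add h1).add h2
    rw [add_zero, add_zero] at hlim
    exact le_of_tendsto_of_tendsto' tendsto_const_nhds hlim hbound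
  -- Step 2 : S ≤ 2 * A * B
  have step2 : S ≤ 2 * (A * B) := by
    have hs1 : Summable fun k : ℤ => ‖φ (k + 1) - φ k‖ * ‖φ (k + 1)‖ := by
      apply Summable.of_nonneg_of_le (fun k => mul_nonneg (norm_nonneg _) (norm_nonneg _))
        (fun k => ?_) ((hd.add hshift).div_const 2)
      have := sq_nonneg (‖φ (k + 1) - φ k‖ - ‖φ (k + 1)‖); nlinarith
    have hs2 : Summable fun k : ℤ => ‖φ (k + 1) - φ k‖ * ‖φ k‖ := by
      apply Summable.of_nonneg_of_le (fun k => mul_nonneg (norm_nonneg _) (norm_nonneg _))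
        (fun k => ?_) ((hd.add hφ).div_const 2)
      have := sq_nonneg (‖φ (k + 1) - φ k‖ - ‖φ k‖); nlinarith
    have hSle : S ≤ ∑' k : ℤ,
        (‖φ (k + 1) - φ k‖ * ‖φ (k + 1)‖ + ‖φ (k + 1) - φ k‖ * ‖φ k‖) :=
      Summable.tsum_le_tsum key hΔ (hs1.add hs2)
    have cs1 : ∑' k : ℤ, ‖φ (k + 1) - φ k‖ * ‖φ (k + 1)‖ ≤ B * A := by
      have := tsum_cs (fun k => ‖φ (k + 1) - φ k‖) (fun k => ‖φ (k + 1)‖)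
        (fun k => norm_nonneg _) (fun k => norm_nonneg _) hd hshift
      rwa [hshift_eq, ← hA, ← hB] at this
    have cs2 : ∑' k : ℤ, ‖φ (k + 1) - φ k‖ * ‖φ k‖ ≤ B * A := by
      have := tsum_cs (fun k => ‖φ (k + 1) - φ k‖) (fun k => ‖φ k‖)
        (fun k => norm_nonneg _) (fun k => norm_nonneg _) hd hφ
      rwa [← hA, ← hB] at this
    have hsplit := Summable.tsum_add hs1 hs2
    rw [hsplit] at hSle
    linarith
  have hAB : 0 ≤ A * B := mul_nonneg (Real.sqrt_nonneg _) (Real.sqrt_nonneg _)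
  linarith
end

section
/- Let ψ_1, …, ψ_N ∈ ℓ²(ℤ) be an orthonormal family of complex sequences, and set ρ(n) = ∑_{j=1}^N |ψ_j(n)|² for n ∈ ℤ. Then ∑_{n∈ℤ} ρ(n)³ ≤ ∑_{j=1}^N ∑_{n∈ℤ} |Dψ_j(n)|², where (Dψ)(n) = ψ(n+1) − ψ(n). -/
/-!
Let `K m n = ∑ j, ψ j m * conj (ψ j n)` be the kernel of the orthogonal projection onto the span
of the `ψ j`. By orthonormality `m ↦ K m n` has squared `ℓ²` norm `ρ n` and `K n n = ρ n`, so the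
discrete Agmon inequality `‖φ n‖ ^ 4 ≤ ‖φ‖² ‖Dφ‖²`, applied to `φ = K · n`, gives
`ρ n ^ 3 ≤ ∑' m, ‖K (m + 1) n - K m n‖ ^ 2`. Summing over `n` and applying Parseval in the second
variable, `∑' n, ‖∑ j, Dψ j m * conj (ψ j n)‖ ^ 2 = ∑ j, ‖Dψ j m‖ ^ 2`, gives the claim.
Agmon's inequality holds because `2 ‖φ n‖ ^ 2` is bounded by the total variation of `‖φ‖ ^ 2`,
which by Cauchy–Schwarz is at most `2 ‖Dφ‖ ‖φ‖`.
-/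

open Complex ComplexConjugate Filter Topology

lemma le_tsum_abs_sub_succ {y : ℕ → ℝ} (hy : Tendsto y atTop (𝓝 0))
    (hs : Summable fun k => |y (k + 1) - y k|) : y 0 ≤ ∑' k, |y (k + 1) - y k| := by
  have hpartial : ∀ M, y 0 - y M ≤ ∑' k, |y (k + 1) - y k| := fun M => by
    rw [← Finset.sum_range_sub']
    calc _ ≤ ∑ k ∈ Finset.range M, |y (k + 1) - y k| :=
          Finset.sum_le_sum fun k _ => abs_sub_comm (y (k + 1)) (y k) ▸ le_abs_self _
      _ ≤ _ := hs.sum_le_tsum _ fun k _ => abs_nonneg _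
  simpa using le_of_tendsto' (tendsto_const_nhds.sub hy) hpartial

lemma two_mul_le_tsum_abs_sub_succ {y : ℤ → ℝ} (hy : Tendsto y cofinite (𝓝 0))
    (hs : Summable fun m => |y (m + 1) - y m|) (n : ℤ) :
    2 * y n ≤ ∑' m, |y (m + 1) - y m| := by
  set g : ℤ → ℝ := fun m => |y (m + 1) - y m|
  have hg : Summable fun m => g (m + n) := (Equiv.addRight n).summable_iff.mpr hs
  have hg₁ : Summable fun k : ℕ => g (k + n) := hg.comp_injective Nat.cast_injective
  have hg₂ : Summable fun k : ℕ => g (-(k + 1) + n) :=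
    hg.comp_injective fun a b h => by simpa using h
  have hy' : ∀ f : ℕ → ℤ, f.Injective → Tendsto (y ∘ f) atTop (𝓝 0) := fun f hf =>
    Nat.cofinite_eq_atTop ▸ hy.comp hf.tendsto_cofinite
  have hup : y n ≤ ∑' k : ℕ, g (k + n) := by
    have := le_tsum_abs_sub_succ (y := fun k : ℕ => y (k + n))
      (hy' _ fun a b h => by simpa using h) (by push_cast; simpa [g, add_right_comm] using hg₁)
    push_cast at this
    simpa [g, add_right_comm] using this
  have hdown : y n ≤ ∑' k : ℕ, g (-(k + 1) + n) := by
    have := le_tsum_abs_sub_succ (y := fun k : ℕ => y (n - k)) (hy' _ fun a b h => by simpa using h)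
      (by push_cast; simpa [g, abs_sub_comm, sub_add_eq_add_sub, neg_add_eq_sub, sub_sub] using hg₂)
    push_cast at this
    simpa [g, abs_sub_comm, sub_add_eq_add_sub, neg_add_eq_sub, sub_sub] using this
  calc 2 * y n ≤ ∑' k : ℕ, g (k + n) + ∑' k : ℕ, g (-(k + 1) + n) := by linarith
    _ = ∑' m, g (m + n) := (tsum_of_nat_of_neg_add_one (f := fun m => g (m + n)) hg₁ hg₂).symm
    _ = ∑' m, g m := (Equiv.addRight n).tsum_eq g

section Agmon

variable {E : Type*} [SeminormedAddCommGroup E]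

lemma abs_sq_norm_sub_sq_norm_le (a b : E) : |‖a‖ ^ 2 - ‖b‖ ^ 2| ≤ ‖a - b‖ * (‖a‖ + ‖b‖) := by
  rw [sq_sub_sq, abs_mul, abs_of_nonneg (by positivity : 0 ≤ ‖a‖ + ‖b‖), mul_comm]
  exact mul_le_mul_of_nonneg_right (abs_norm_sub_norm_le a b) (by positivity)

lemma norm_sub_sq_le (a b : E) : ‖a - b‖ ^ 2 ≤ 2 * (‖a‖ ^ 2 + ‖b‖ ^ 2) :=
  (pow_le_pow_left₀ (norm_nonneg _) (norm_sub_le a b) 2).trans add_sq_le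

lemma summable_norm_sub_succ_sq {φ : ℤ → E} (hφ : Summable fun m => ‖φ m‖ ^ 2) :
    Summable fun m => ‖φ (m + 1) - φ m‖ ^ 2 := by
  have hshift : Summable fun m => ‖φ (m + 1)‖ ^ 2 :=
    (Equiv.addRight (1 : ℤ)).summable_iff.mpr hφ
  exact .of_nonneg_of_le (fun _ => sq_nonneg _) (fun m => norm_sub_sq_le _ _)
    ((hshift.add hφ).mul_left 2)

lemma tsum_abs_sub_succ_sq_norm_le {φ : ℤ → E} (hφ : Summable fun m => ‖φ m‖ ^ 2) :
    ∑' m, |‖φ (m + 1)‖ ^ 2 - ‖φ m‖ ^ 2|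
      ≤ √(∑' m, ‖φ (m + 1) - φ m‖ ^ 2) * √(4 * ∑' m, ‖φ m‖ ^ 2) := by
  have hshift : HasSum (fun m => ‖φ (m + 1)‖ ^ 2) (∑' m, ‖φ m‖ ^ 2) :=
    (Equiv.addRight (1 : ℤ)).hasSum_iff.mpr hφ.hasSum
  refine Real.tsum_le_of_sum_le (fun _ => abs_nonneg _) fun s => ?_
  calc ∑ m ∈ s, |‖φ (m + 1)‖ ^ 2 - ‖φ m‖ ^ 2|
      ≤ ∑ m ∈ s, ‖φ (m + 1) - φ m‖ * (‖φ (m + 1)‖ + ‖φ m‖) :=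
        Finset.sum_le_sum fun m _ => abs_sq_norm_sub_sq_norm_le _ _
    _ ≤ √(∑ m ∈ s, ‖φ (m + 1) - φ m‖ ^ 2) * √(∑ m ∈ s, (‖φ (m + 1)‖ + ‖φ m‖) ^ 2) :=
        Real.sum_mul_le_sqrt_mul_sqrt _ _ _
    _ ≤ _ := by
        gcongr
        · exact (summable_norm_sub_succ_sq hφ).sum_le_tsum _ fun _ _ => sq_nonneg _
        · calc ∑ m ∈ s, (‖φ (m + 1)‖ + ‖φ m‖) ^ 2
              ≤ 2 * (∑ m ∈ s, ‖φ (m + 1)‖ ^ 2 + ∑ m ∈ s, ‖φ m‖ ^ 2) := by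
                rw [Finset.sum_add_distrib.symm, Finset.mul_sum]
                exact Finset.sum_le_sum fun _ _ => add_sq_le
            _ ≤ 2 * (∑' m, ‖φ m‖ ^ 2 + ∑' m, ‖φ m‖ ^ 2) := by
                gcongr
                · exact (hshift.summable.sum_le_tsum _ fun _ _ => sq_nonneg _).trans_eq
                    hshift.tsum_eq
                · exact hφ.sum_le_tsum _ fun _ _ => sq_nonneg _
            _ = 4 * ∑' m, ‖φ m‖ ^ 2 := by ring

theorem norm_sq_sq_le_tsum_mul_tsum {φ : ℤ → E} (hφ : Summable fun m => ‖φ m‖ ^ 2) (n : ℤ) :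
    (‖φ n‖ ^ 2) ^ 2 ≤ (∑' m, ‖φ m‖ ^ 2) * ∑' m, ‖φ (m + 1) - φ m‖ ^ 2 := by
  have hvar : Summable fun m => |‖φ (m + 1)‖ ^ 2 - ‖φ m‖ ^ 2| :=
    .of_nonneg_of_le (fun _ => abs_nonneg _)
      (fun m => abs_sub_le_of_nonneg_of_le (by positivity) (le_add_of_nonneg_right (by positivity))
        (by positivity) (le_add_of_nonneg_left (by positivity)))
      (((Equiv.addRight (1 : ℤ)).summable_iff.mpr hφ).add hφ)
  have hX : 0 ≤ ∑' m, ‖φ (m + 1) - φ m‖ ^ 2 := tsum_nonneg fun _ => sq_nonneg _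
  have hsq : (2 * ‖φ n‖ ^ 2) ^ 2 ≤ (∑' m, ‖φ (m + 1) - φ m‖ ^ 2) * (4 * ∑' m, ‖φ m‖ ^ 2) :=
    (Real.le_sqrt (by positivity) (by positivity)).mp <|
      (two_mul_le_tsum_abs_sub_succ hφ.tendsto_cofinite_zero hvar n).trans <|
        (tsum_abs_sub_succ_sq_norm_le hφ).trans_eq (Real.sqrt_mul hX _).symm
  nlinarith

end Agmon

section Kernel

variable {ι α : Type*} [Fintype ι]

lemma summable_mul_conj {f g : α → ℂ} (hf : Summable fun n => ‖f n‖ ^ 2)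
    (hg : Summable fun n => ‖g n‖ ^ 2) : Summable fun n => f n * conj (g n) :=
  .of_norm_bounded (hf.add hg) fun n => by
    rw [norm_mul, RCLike.norm_conj]
    nlinarith [two_mul_le_add_sq ‖f n‖ ‖g n‖, norm_nonneg (f n), norm_nonneg (g n)]

lemma hasSum_norm_sq_sum_mul_conj [DecidableEq ι] {ψ : ι → α → ℂ}
    (horth : ∀ j k, HasSum (fun n => ψ j n * conj (ψ k n)) (if j = k then 1 else 0))
    (b : ι → ℂ) : HasSum (fun n => ‖∑ j, b j * conj (ψ j n)‖ ^ 2) (∑ j, ‖b j‖ ^ 2) := by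
  have hexpand : ∀ n, ((‖∑ j, b j * conj (ψ j n)‖ ^ 2 : ℝ) : ℂ) =
      ∑ j, ∑ k, b j * conj (b k) * (ψ k n * conj (ψ j n)) := fun n => by
    rw [ofReal_pow, ← mul_conj', map_sum, Finset.sum_mul_sum]
    refine Finset.sum_congr rfl fun j _ => Finset.sum_congr rfl fun k _ => ?_
    simp only [map_mul, conj_conj]
    ring
  have hval : ((∑ j, ‖b j‖ ^ 2 : ℝ) : ℂ) = ∑ j, ∑ k, b j * conj (b k) * if k = j then 1 else 0 := by
    simp [mul_conj']
  rw [← hasSum_ofReal, funext hexpand, hval]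
  exact hasSum_sum fun j _ => hasSum_sum fun k _ => (horth k j).mul_left _

def projKernel (ψ : ι → α → ℂ) (m n : α) : ℂ := ∑ j, ψ j m * conj (ψ j n)

variable (ψ : ι → α → ℂ)

lemma norm_projKernel_comm (m n : α) : ‖projKernel ψ m n‖ = ‖projKernel ψ n m‖ := by
  rw [← RCLike.norm_conj, projKernel, map_sum]
  simp only [map_mul, conj_conj, mul_comm, projKernel]

lemma projKernel_self (n : α) : projKernel ψ n n = ((∑ j, ‖ψ j n‖ ^ 2 : ℝ) : ℂ) := by
  simp [projKernel, mul_conj']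

lemma projKernel_sub_projKernel (m m' n : α) :
    projKernel ψ m' n - projKernel ψ m n = ∑ j, (ψ j m' - ψ j m) * conj (ψ j n) := by
  simp only [projKernel, ← Finset.sum_sub_distrib, sub_mul]

end Kernel

lemma pow_three_le_tsum_norm_projKernel_succ_sub {ι : Type*} [Fintype ι] [DecidableEq ι]
    {ψ : ι → ℤ → ℂ}
    (horth : ∀ j k, HasSum (fun n => ψ j n * conj (ψ k n)) (if j = k then 1 else 0)) (n : ℤ) :
    (∑ j, ‖ψ j n‖ ^ 2) ^ 3 ≤ ∑' m, ‖projKernel ψ (m + 1) n - projKernel ψ m n‖ ^ 2 := by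
  set ρ := ∑ j, ‖ψ j n‖ ^ 2
  have hK : HasSum (fun m => ‖projKernel ψ m n‖ ^ 2) ρ := by
    have h : HasSum (fun m => ‖projKernel ψ n m‖ ^ 2) ρ :=
      hasSum_norm_sq_sum_mul_conj horth fun j => ψ j n
    simpa only [norm_projKernel_comm ψ n] using h
  have hagmon := norm_sq_sq_le_tsum_mul_tsum hK.summable n
  rw [hK.tsum_eq, projKernel_self, norm_real, Real.norm_of_nonneg (by positivity)] at hagmon
  rcases (show 0 ≤ ρ by positivity).eq_or_lt with hρ | hρ
  · rw [← hρ, zero_pow three_ne_zero]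
    exact tsum_nonneg fun _ => sq_nonneg _
  · exact le_of_mul_le_mul_left (by linarith [show ρ * ρ ^ 3 = (ρ ^ 2) ^ 2 by ring]) hρ

theorem stmt_7
    (N : ℕ) (ψ : Fin N → ℤ → ℂ)
    (hl2 : ∀ j, Summable fun n : ℤ => ‖ψ j n‖ ^ 2)
    (horth : ∀ j k, (∑' n : ℤ, ψ j n * (starRingEnd ℂ) (ψ k n)) = if j = k then 1 else 0) :
    (∑' n : ℤ, (∑ j : Fin N, ‖ψ j n‖ ^ 2) ^ 3)
      ≤ ∑ j : Fin N, ∑' n : ℤ, ‖ψ j (n + 1) - ψ j n‖ ^ 2 := by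
  have horth_hasSum : ∀ j k, HasSum (fun n => ψ j n * conj (ψ k n)) (if j = k then 1 else 0) :=
    fun j k => (horth j k ▸ (summable_mul_conj (hl2 j) (hl2 k)).hasSum :)
  set W : ℤ × ℤ → ℝ := fun p => ‖projKernel ψ (p.1 + 1) p.2 - projKernel ψ p.1 p.2‖ ^ 2
  have hW : ∀ m, HasSum (fun n => W (m, n)) (∑ j, ‖ψ j (m + 1) - ψ j m‖ ^ 2) := fun m => by
    simp only [W, projKernel_sub_projKernel]
    exact hasSum_norm_sq_sum_mul_conj horth_hasSum fun j => ψ j (m + 1) - ψ j m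
  have hD : ∀ j, Summable fun m => ‖ψ j (m + 1) - ψ j m‖ ^ 2 :=
    fun j => summable_norm_sub_succ_sq (hl2 j)
  have hWsum : Summable W := (summable_prod_of_nonneg fun _ => sq_nonneg _).mpr
    ⟨fun m => (hW m).summable, (summable_sum fun j _ => hD j).congr fun m => (hW m).tsum_eq.symm⟩
  have hmarg : Summable fun n => ∑' m, W (m, n) := hWsum.prod_symm.prod
  have hpoint : ∀ n, (∑ j, ‖ψ j n‖ ^ 2) ^ 3 ≤ ∑' m, W (m, n) :=
    pow_three_le_tsum_norm_projKernel_succ_sub horth_hasSum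
  calc _ ≤ ∑' n, ∑' m, W (m, n) :=
        Summable.tsum_le_tsum hpoint (hmarg.of_nonneg_of_le (fun _ => by positivity) hpoint) hmarg
    _ = ∑' m, ∑' n, W (m, n) := hWsum.tsum_comm
    _ = ∑' m, ∑ j, ‖ψ j (m + 1) - ψ j m‖ ^ 2 := tsum_congr fun m => (hW m).tsum_eq
    _ = _ := Summable.tsum_finsetSum fun j _ => hD j
end

section
/- Let ψ_1, …, ψ_N ∈ ℓ²(ℤ) be an orthonormal family of complex sequences, let ξ = (ξ_1, …, ξ_N) ∈ ℂ^N, and let n ∈ ℤ. Then |∑_{j=1}^N ξ_j ψ_j(n)|⁴ ≤ ( ∑_{j=1}^N |ξ_j|² ) · ∑_{k∈ℤ} | ∑_{j=1}^N ξ_j (Dψ_j)(k) |², where (Dψ)(k) = ψ(k+1) − ψ(k). -/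
/-!
Write `f = ∑ j, ξ j * ψ j`. Orthonormality makes `f` a vector of `ℓ²(ℤ)` with
`‖f‖² = ∑ |ξ j|²`, so it suffices to show `|f n|⁴ ≤ ‖f‖² ‖Df‖²` for every `f ∈ ℓ²(ℤ)`.
Since `|f k|² → 0` in both directions, telescoping `|f k|²` from `n` to `+∞` and to `-∞` gives
`2 |f n|² ≤ ∑ₖ ||f (k+1)|² - |f k|²| ≤ ∑ₖ |Df k| (|f k| + |f (k+1)|) ≤ 2 ‖Df‖ ‖f‖`
by Cauchy–Schwarz.
-/

open Finset Filter Topology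
open scoped ComplexConjugate

theorem le_tsum_of_abs_sub_succ_le {u e : ℕ → ℝ} (hu : Tendsto u atTop (𝓝 0)) (he : Summable e)
    (hue : ∀ i, |u i - u (i + 1)| ≤ e i) : u 0 ≤ ∑' i, e i := by
  have he0 : ∀ i, 0 ≤ e i := fun i => (abs_nonneg _).trans (hue i)
  have hpartial : ∀ m, u 0 - u m ≤ ∑' i, e i := fun m => by
    rw [← sum_range_sub']
    exact (sum_le_sum fun i _ => (le_abs_self _).trans (hue i)).trans
      (he.sum_le_tsum _ fun i _ => he0 i)
  exact le_of_tendsto' (by simpa using (tendsto_const_nhds (x := u 0)).sub hu) hpartial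

theorem two_mul_le_tsum_of_abs_sub_le {g e : ℤ → ℝ} (hg : Tendsto g cofinite (𝓝 0))
    (he : Summable e) (hge : ∀ k, |g (k + 1) - g k| ≤ e k) (n : ℤ) :
    2 * g n ≤ ∑' k, e k := by
  have hshift : Summable fun k => e (n + k) := he.comp_injective (add_right_injective n)
  have hu : Tendsto (fun i : ℕ => g (n + i) + g (n - i)) atTop (𝓝 0) := by
    rw [← Nat.cofinite_eq_atTop]
    simpa using (hg.comp (Function.Injective.tendsto_cofinite fun i j h => by simpa using h)).add
      (hg.comp (Function.Injective.tendsto_cofinite fun i j h => by simpa using h))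
  have hstep : ∀ i : ℕ, |(g (n + i) + g (n - i)) - (g (n + ↑(i + 1)) + g (n - ↑(i + 1)))|
      ≤ e (n + i) + e (n + -(i + 1)) := fun i => by
    calc _ = |-(g (n + i + 1) - g (n + i)) + (g (n + -(i + 1) + 1) - g (n + -(i + 1)))| := by
          push_cast; ring_nf
      _ ≤ e (n + i) + e (n + -(i + 1)) :=
          (abs_add_le _ _).trans (by rw [abs_neg]; exact add_le_add (hge _) (hge _))
  calc 2 * g n = g (n + (0 : ℕ)) + g (n - (0 : ℕ)) := by
        simp only [Nat.cast_zero, add_zero, sub_zero]; ring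
    _ ≤ ∑' i : ℕ, (e (n + i) + e (n + -(i + 1))) :=
      le_tsum_of_abs_sub_succ_le hu hshift.nat_add_neg_add_one hstep
    _ = ∑' k, e k := by rw [tsum_nat_add_neg_add_one hshift]; exact (Equiv.addLeft n).tsum_eq e

theorem abs_norm_sq_sub_norm_sq_le {E : Type*} [SeminormedAddCommGroup E] (a b : E) :
    |‖a‖ ^ 2 - ‖b‖ ^ 2| ≤ ‖a - b‖ * ‖b‖ + ‖a - b‖ * ‖a‖ := by
  have h := abs_norm_sub_norm_le a b
  rw [show ‖a‖ ^ 2 - ‖b‖ ^ 2 = (‖a‖ - ‖b‖) * (‖a‖ + ‖b‖) by ring, abs_mul,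
    abs_of_nonneg (by positivity : 0 ≤ ‖a‖ + ‖b‖)]
  nlinarith [norm_nonneg a, norm_nonneg b]

theorem summable_mul_and_tsum_mul_le_sqrt_mul_sqrt {ι : Type*} {f g : ι → ℝ} (hf : ∀ i, 0 ≤ f i)
    (hg : ∀ i, 0 ≤ g i) (hf2 : Summable fun i => f i ^ 2) (hg2 : Summable fun i => g i ^ 2) :
    (Summable fun i => f i * g i) ∧
      ∑' i, f i * g i ≤ √(∑' i, f i ^ 2) * √(∑' i, g i ^ 2) := by
  simpa [Real.sqrt_eq_rpow] using
    Real.summable_and_inner_le_Lp_mul_Lq_tsum_of_nonneg .two_two hf hg (by simpa using hf2)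
      (by simpa using hg2)

theorem norm_pow_four_le_tsum_norm_sq_mul_tsum_norm_sub_sq {E : Type*} [SeminormedAddCommGroup E]
    {f : ℤ → E} (hf : Summable fun k => ‖f k‖ ^ 2) (n : ℤ) :
    ‖f n‖ ^ 4 ≤ (∑' k, ‖f k‖ ^ 2) * ∑' k, ‖f (k + 1) - f k‖ ^ 2 := by
  have hf' : Summable fun k => ‖f (k + 1)‖ ^ 2 := hf.comp_injective (add_left_injective 1)
  have hDf : Summable fun k => ‖f (k + 1) - f k‖ ^ 2 :=
    .of_nonneg_of_le (fun _ => by positivity)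
      (fun k => (pow_le_pow_left₀ (norm_nonneg _) (norm_sub_le _ _) 2).trans add_sq_le)
      ((hf'.add hf).mul_left 2)
  obtain ⟨hs, hle⟩ := summable_mul_and_tsum_mul_le_sqrt_mul_sqrt (fun _ => norm_nonneg _)
    (fun _ => norm_nonneg _) hDf hf
  obtain ⟨hs', hle'⟩ := summable_mul_and_tsum_mul_le_sqrt_mul_sqrt (fun _ => norm_nonneg _)
    (fun _ => norm_nonneg _) hDf hf'
  have hshift : ∑' k, ‖f (k + 1)‖ ^ 2 = ∑' k, ‖f k‖ ^ 2 :=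
    (Equiv.addRight 1).tsum_eq fun k => ‖f k‖ ^ 2
  rw [hshift] at hle'
  set A := ∑' k, ‖f k‖ ^ 2
  set B := ∑' k, ‖f (k + 1) - f k‖ ^ 2
  have h2 : 2 * ‖f n‖ ^ 2 ≤ 2 * (√B * √A) := by
    calc 2 * ‖f n‖ ^ 2
        ≤ ∑' k, (‖f (k + 1) - f k‖ * ‖f k‖ + ‖f (k + 1) - f k‖ * ‖f (k + 1)‖) :=
          two_mul_le_tsum_of_abs_sub_le hf.tendsto_cofinite_zero (hs.add hs')
            (fun k => abs_norm_sq_sub_norm_sq_le _ _) n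
      _ ≤ 2 * (√B * √A) := by rw [hs.tsum_add hs']; linarith
  have hA : 0 ≤ A := tsum_nonneg fun _ => by positivity
  calc ‖f n‖ ^ 4 = (‖f n‖ ^ 2) ^ 2 := by ring
    _ ≤ (√B * √A) ^ 2 := by gcongr; linarith
    _ = A * B := by
      rw [mul_pow, Real.sq_sqrt hA, Real.sq_sqrt (tsum_nonneg fun _ => by positivity), mul_comm]

theorem hasSum_norm_sq_sum_mul_of_orthonormal {𝕜 α ι : Type*} [RCLike 𝕜] [Fintype ι]
    [DecidableEq ι] {ψ : ι → α → 𝕜} (hl2 : ∀ j, Summable fun a => ‖ψ j a‖ ^ 2)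
    (horth : ∀ j k, ∑' a, ψ j a * conj (ψ k a) = if j = k then 1 else 0) (ξ : ι → 𝕜) :
    HasSum (fun a => ‖∑ j, ξ j * ψ j a‖ ^ 2) (∑ j, ‖ξ j‖ ^ 2) := by
  let Ψ : ι → lp (fun _ : α => 𝕜) 2 := fun j => ⟨ψ j, memℓp_gen (by simpa using hl2 j)⟩
  have hΨ : Orthonormal 𝕜 Ψ := by
    rw [orthonormal_iff_ite]
    intro j k
    rw [lp.inner_eq_tsum]
    simpa [Ψ, RCLike.inner_apply, mul_comm, eq_comm] using horth k j
  have hnorm : ‖∑ j, ξ j • Ψ j‖ ^ 2 = ∑ j, ‖ξ j‖ ^ 2 := by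
    rw [← inner_self_eq_norm_sq (𝕜 := 𝕜), hΨ.inner_sum]
    simp [RCLike.conj_mul]
  have hcoe : ∀ a, (∑ j, ξ j • Ψ j) a = ∑ j, ξ j * ψ j a := fun a => by
    rw [lp.coeFn_sum, Finset.sum_apply]
    rfl
  have h := lp.hasSum_norm (p := 2) (by norm_num) (∑ j, ξ j • Ψ j)
  simpa only [hcoe, ENNReal.toReal_ofNat, Real.rpow_two, hnorm] using h

theorem stmt_8
    (N : ℕ) (ψ : Fin N → ℤ → ℂ)
    (hl2 : ∀ j, Summable fun n : ℤ => ‖ψ j n‖ ^ 2)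
    (horth : ∀ j k, (∑' n : ℤ, ψ j n * (starRingEnd ℂ) (ψ k n)) = if j = k then 1 else 0)
    (ξ : Fin N → ℂ) (n : ℤ) :
    ‖∑ j : Fin N, ξ j * ψ j n‖ ^ 4
      ≤ (∑ j : Fin N, ‖ξ j‖ ^ 2) *
        ∑' k : ℤ, ‖∑ j : Fin N, ξ j * (ψ j (k + 1) - ψ j k)‖ ^ 2 := by
  have hf := hasSum_norm_sq_sum_mul_of_orthonormal hl2 horth ξ
  simpa only [hf.tsum_eq, mul_sub, sum_sub_distrib] using
    norm_pow_four_le_tsum_norm_sq_mul_tsum_norm_sub_sq hf.summable n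
end

section
/- Let (a_n)_{n∈ℤ} be a real sequence with a_n > 0 and (b_n)_{n∈ℤ} a real sequence, and define b_n^± = b_n ± (|a_{n−1} − 1| + |a_n − 1|). Then for every finitely supported complex sequence u on ℤ: ∑_{n∈ℤ} ( u(n−1) + b_n^− u(n) + u(n+1) ) · conj(u(n)) ≤ ∑_{n∈ℤ} ( a_{n−1} u(n−1) + b_n u(n) + a_n u(n+1) ) · conj(u(n)) ≤ ∑_{n∈ℤ} ( u(n−1) + b_n^+ u(n) + u(n+1) ) · conj(u(n)), where all three sums are real. In other words, in the sense of quadratic forms, W({a_n ≡ 1}, {b_n^−}) ≤ W({a_n}, {b_n}) ≤ W({a_n ≡ 1}, {b_n^+}). -/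
/-!
Reindexing `n ↦ n + 1` turns the form `∑ (W(c, d) u)(n) · conj (u n)` into the visibly real sum
`∑ (2 c_n Re (u(n+1) conj (u n)) + d_n |u n|²)`. The form is additive in the coefficients, and with
`s_n = |a_{n-1} - 1| + |a_n - 1|` we have `W(a, b) - W(1, b⁻) = W(a - 1, s)` and
`W(1, b⁺) - W(a, b) = W(1 - a, s)`. A form whose diagonal dominates `|c_{n-1}| + |c_n|` is
nonnegative: `|2 c_n Re (u(n+1) conj (u n))| ≤ |c_n| (|u n|² + |u(n+1)|²)`, and reindexing hands
the two halves of each `|c_n|` to the diagonal entries `n` and `n + 1`.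
-/

open Complex ComplexConjugate ComplexOrder

noncomputable def jacobiForm (c d : ℤ → ℝ) (u : ℤ → ℂ) : ℂ :=
  ∑' n : ℤ, ((c (n - 1) : ℂ) * u (n - 1) + (d n : ℂ) * u n + (c n : ℂ) * u (n + 1)) * conj (u n)

lemma summable_of_eq_zero_of_finite_support {E : Type*} [AddCommMonoid E] [TopologicalSpace E]
    {u : ℤ → ℂ} (hu : u.support.Finite) {F : ℤ → E}
    (hF : ∀ n, u n = 0 → u (n + 1) = 0 → F n = 0) : Summable F := by
  refine summable_of_hasFiniteSupport <|
    (hu.union (hu.preimage (add_left_injective 1).injOn)).subset fun n hn => ?_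
  by_contra h
  simp only [Set.mem_union, Set.mem_preimage, Function.mem_support, not_or, not_not] at h
  exact hn (hF n h.1 h.2)

lemma abs_two_mul_re_mul_conj_le (x y : ℂ) :
    |2 * (y * conj x).re| ≤ normSq x + normSq y := by
  exact abs_le.2 ⟨by linarith [normSq_nonneg (y + x), normSq_add y x],
    by linarith [normSq_nonneg (y - x), normSq_sub y x]⟩

lemma neg_abs_mul_le_two_mul_re_mul_conj (c : ℝ) (x y : ℂ) :
    -(|c| * (normSq x + normSq y)) ≤ c * (2 * (y * conj x).re) := by
  refine neg_le_of_abs_le ?_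
  rw [abs_mul]
  exact mul_le_mul_of_nonneg_left (abs_two_mul_re_mul_conj_le x y) (abs_nonneg c)

lemma jacobiForm_eq_ofReal_tsum (c d : ℤ → ℝ) {u : ℤ → ℂ} (hu : u.support.Finite) :
    jacobiForm c d u =
      ↑(∑' n, (c n * (2 * (u (n + 1) * conj (u n)).re) + d n * normSq (u n))) := by
  have hshift : ∑' n, (c (n - 1) : ℂ) * u (n - 1) * conj (u n) =
      ∑' n, (c n : ℂ) * u n * conj (u (n + 1)) := by
    rw [← (Equiv.addRight (1 : ℤ)).tsum_eq]
    simp only [Equiv.coe_addRight, add_sub_cancel_right]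
  have hcross : ∀ n, (c n : ℂ) * u n * conj (u (n + 1)) + c n * u (n + 1) * conj (u n) =
      ↑(c n * (2 * (u (n + 1) * conj (u n)).re)) := fun n => by
    have hconj : u n * conj (u (n + 1)) = conj (u (n + 1) * conj (u n)) := by
      rw [map_mul, conj_conj, mul_comm]
    rw [mul_assoc, mul_assoc, hconj, ← mul_add, add_comm, add_conj]
    push_cast
    ring
  have hdiag : ∀ n, (d n : ℂ) * u n * conj (u n) = ↑(d n * normSq (u n)) := fun n => by
    rw [mul_assoc, mul_conj, ofReal_mul]
  calc jacobiForm c d u = ∑' n, (c (n - 1) : ℂ) * u (n - 1) * conj (u n) +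
        ∑' n, ((c n : ℂ) * u (n + 1) * conj (u n) + (d n : ℂ) * u n * conj (u n)) := by
        rw [jacobiForm, ← Summable.tsum_add]
        · exact tsum_congr fun n => by ring
        all_goals exact summable_of_eq_zero_of_finite_support hu fun n h _ => by simp [h]
    _ = ∑' n, (((c n : ℂ) * u n * conj (u (n + 1)) + c n * u (n + 1) * conj (u n)) +
        (d n : ℂ) * u n * conj (u n)) := by
        rw [hshift, ← Summable.tsum_add]
        · exact tsum_congr fun n => by ring
        all_goals exact summable_of_eq_zero_of_finite_support hu fun n h _ => by simp [h]
    _ = _ := by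
        rw [ofReal_tsum]
        exact tsum_congr fun n => by rw [hcross, hdiag, ofReal_add]

lemma jacobiForm_im (c d : ℤ → ℝ) {u : ℤ → ℂ} (hu : u.support.Finite) :
    (jacobiForm c d u).im = 0 := by
  rw [jacobiForm_eq_ofReal_tsum c d hu, ofReal_im]

lemma jacobiForm_sub (c d c' d' : ℤ → ℝ) {u : ℤ → ℂ} (hu : u.support.Finite) :
    jacobiForm c d u - jacobiForm c' d' u = jacobiForm (c - c') (d - d') u := by
  rw [jacobiForm, jacobiForm, jacobiForm, ← Summable.tsum_sub]
  · exact tsum_congr fun n => by simp only [Pi.sub_apply, ofReal_sub]; ring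
  all_goals exact summable_of_eq_zero_of_finite_support hu fun n h _ => by simp [h]

lemma jacobiForm_nonneg (c d : ℤ → ℝ) (hd : ∀ n, |c (n - 1)| + |c n| ≤ d n) {u : ℤ → ℂ}
    (hu : u.support.Finite) : 0 ≤ jacobiForm c d u := by
  rw [jacobiForm_eq_ofReal_tsum c d hu, zero_le_real]
  have hshift : ∑' n, |c n| * normSq (u (n + 1)) = ∑' n, |c (n - 1)| * normSq (u n) := by
    rw [← (Equiv.addRight (1 : ℤ)).tsum_eq fun n => |c (n - 1)| * normSq (u n)]
    simp only [Equiv.coe_addRight, add_sub_cancel_right]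
  calc 0 ≤ ∑' n, (c n * (2 * (u (n + 1) * conj (u n)).re) +
        |c n| * (normSq (u n) + normSq (u (n + 1)))) :=
        tsum_nonneg fun n => by linarith [neg_abs_mul_le_two_mul_re_mul_conj (c n) (u n) (u (n + 1))]
    _ = ∑' n, (c n * (2 * (u (n + 1) * conj (u n)).re) + |c n| * normSq (u n)) +
        ∑' n, |c n| * normSq (u (n + 1)) := by
        rw [← Summable.tsum_add]
        · exact tsum_congr fun n => by ring
        all_goals exact summable_of_eq_zero_of_finite_support hu fun n h h' => by simp [h, h']
    _ = ∑' n, (c n * (2 * (u (n + 1) * conj (u n)).re) +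
        (|c (n - 1)| + |c n|) * normSq (u n)) := by
        rw [hshift, ← Summable.tsum_add]
        · exact tsum_congr fun n => by ring
        all_goals exact summable_of_eq_zero_of_finite_support hu fun n h _ => by simp [h]
    _ ≤ _ := by
        refine Summable.tsum_le_tsum (fun n => ?_) ?_ ?_
        · exact add_le_add_right (mul_le_mul_of_nonneg_right (hd n) (normSq_nonneg _)) _
        all_goals exact summable_of_eq_zero_of_finite_support hu fun n h _ => by simp [h]

theorem stmt_11_general
    (a b : ℤ → ℝ)
    (u : ℤ → ℂ) (hu : (Function.support u).Finite) :
    let bm : ℤ → ℝ := fun n => b n - (|a (n - 1) - 1| + |a n - 1|)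
    let bp : ℤ → ℝ := fun n => b n + (|a (n - 1) - 1| + |a n - 1|)
    let S₁ : ℂ := ∑' n : ℤ, (u (n - 1) + (bm n : ℂ) * u n + u (n + 1)) * (starRingEnd ℂ) (u n)
    let S₂ : ℂ := ∑' n : ℤ,
      ((a (n - 1) : ℂ) * u (n - 1) + (b n : ℂ) * u n + (a n : ℂ) * u (n + 1)) * (starRingEnd ℂ) (u n)
    let S₃ : ℂ := ∑' n : ℤ, (u (n - 1) + (bp n : ℂ) * u n + u (n + 1)) * (starRingEnd ℂ) (u n)
    S₁.im = 0 ∧ S₂.im = 0 ∧ S₃.im = 0 ∧ S₁.re ≤ S₂.re ∧ S₂.re ≤ S₃.re := by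
  intro bm bp S₁ S₂ S₃
  have hS₁ : S₁ = jacobiForm 1 bm u := tsum_congr fun n => by simp
  have hS₂ : S₂ = jacobiForm a b u := rfl
  have hS₃ : S₃ = jacobiForm 1 bp u := tsum_congr fun n => by simp
  have hS₁₂ : S₁ ≤ S₂ := by
    rw [hS₁, hS₂, ← sub_nonneg, jacobiForm_sub _ _ _ _ hu]
    exact jacobiForm_nonneg _ _ (fun n => by simp [bm]) hu
  have hS₂₃ : S₂ ≤ S₃ := by
    rw [hS₂, hS₃, ← sub_nonneg, jacobiForm_sub _ _ _ _ hu]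
    exact jacobiForm_nonneg _ _ (fun n => by simp [bp, abs_sub_comm]) hu
  exact ⟨hS₁ ▸ jacobiForm_im _ _ hu, jacobiForm_im _ _ hu, hS₃ ▸ jacobiForm_im _ _ hu,
    (le_def.1 hS₁₂).1, (le_def.1 hS₂₃).1⟩

theorem stmt_11
    (a b : ℤ → ℝ) (ha : ∀ n, 0 < a n)
    (u : ℤ → ℂ) (hu : (Function.support u).Finite) :
    let bm : ℤ → ℝ := fun n => b n - (|a (n - 1) - 1| + |a n - 1|)
    let bp : ℤ → ℝ := fun n => b n + (|a (n - 1) - 1| + |a n - 1|)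
    let S₁ : ℂ := ∑' n : ℤ, (u (n - 1) + (bm n : ℂ) * u n + u (n + 1)) * (starRingEnd ℂ) (u n)
    let S₂ : ℂ := ∑' n : ℤ,
      ((a (n - 1) : ℂ) * u (n - 1) + (b n : ℂ) * u n + (a n : ℂ) * u (n + 1)) * (starRingEnd ℂ) (u n)
    let S₃ : ℂ := ∑' n : ℤ, (u (n - 1) + (bp n : ℂ) * u n + u (n + 1)) * (starRingEnd ℂ) (u n)
    S₁.im = 0 ∧ S₂.im = 0 ∧ S₃.im = 0 ∧ S₁.re ≤ S₂.re ∧ S₂.re ≤ S₃.re :=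
  stmt_11_general a b u hu
end

section
/- Let (b_n)_{n∈ℤ} be a real sequence with b_n ≥ 0 for all n and ∑_{n∈ℤ} b_n^{3/2} < ∞. Let ψ_1, …, ψ_N ∈ ℓ²(ℤ) be an orthonormal family of eigenvectors of the discrete Schrödinger operator corresponding to negative eigenvalues −e_1, …, −e_N (e_j > 0), i.e. (D*D ψ_j)(n) − b_n ψ_j(n) = −e_j ψ_j(n) for all n. Set X = ( ∑_{n∈ℤ} ( ∑_{j=1}^N |ψ_j(n)|² )³ )^{1/3}. Then X³ − ( ∑_{n∈ℤ} b_n^{3/2} )^{2/3} · X ≤ −∑_{j=1}^N e_j. -/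
/-!
Let `γ(n, m) = ∑ⱼ ψⱼ(n) conj ψⱼ(m)` be the density matrix of the orthonormal family and
`ρ(n) = γ(n, n)` its density. Orthonormality gives `∑ₘ |γ(n, m)|² = ρ(n)`, so the discrete Agmon
inequality `|F(n)|² ≤ ‖F‖ ‖DF‖` applied to `F = γ(n, ·)` yields `ρ(n)³ ≤ ‖Dγ(n, ·)‖²`; summed over
`n`, orthonormality once more turns this into the kinetic bound `∑ ρ³ ≤ ∑ⱼ ‖Dψⱼ‖²`. Pairing the
eigenvalue equation with `ψⱼ` gives `‖Dψⱼ‖² = ∑ b |ψⱼ|² - eⱼ`, and Hölder's inequality with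
exponents `3/2` and `3` bounds `∑ b ρ` by `(∑ b^{3/2})^{2/3} X`, where `X³ = ∑ ρ³`.
-/

open ComplexConjugate Filter Topology fwdDiff

namespace DiscreteLiebThirring

lemma abs_sq_norm_sub_sq_norm_le {E : Type*} [SeminormedAddCommGroup E] (a b : E) :
    |‖a‖ ^ 2 - ‖b‖ ^ 2| ≤ ‖a - b‖ * (‖a‖ + ‖b‖) := by
  rw [sq_sub_sq, abs_mul, abs_of_nonneg (by positivity : 0 ≤ ‖a‖ + ‖b‖), mul_comm ‖a - b‖]
  exact mul_le_mul_of_nonneg_left (abs_norm_sub_norm_le a b) (by positivity)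

lemma le_of_hasSum_of_sub_succ_le {u c : ℕ → ℝ} {s : ℝ} (hu : Tendsto u atTop (𝓝 0))
    (hc : HasSum c s) (huc : ∀ i, u i - u (i + 1) ≤ c i) : u 0 ≤ s := by
  have partial_sums (K : ℕ) : u 0 - u K ≤ ∑ i ∈ Finset.range K, c i := by
    rw [← Finset.sum_range_sub']
    exact Finset.sum_le_sum fun i _ => huc i
  simpa using le_of_tendsto_of_tendsto' (tendsto_const_nhds.sub hu) hc.tendsto_sum_nat partial_sums

section SquareSummable

variable {α : Type*}

lemma summable_mul_of_summable_sq_norm {R : Type*} [NormedRing R] [CompleteSpace R]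
    {f g : α → R} (hf : Summable fun i => ‖f i‖ ^ 2) (hg : Summable fun i => ‖g i‖ ^ 2) :
    Summable fun i => f i * g i :=
  Summable.of_norm_bounded (hf.add hg) fun i => by
    nlinarith [norm_mul_le (f i) (g i), sq_nonneg (‖f i‖ - ‖g i‖), norm_nonneg (f i),
      norm_nonneg (g i)]

lemma summable_mul_conj {φ χ : α → ℂ} (hφ : Summable fun i => ‖φ i‖ ^ 2)
    (hχ : Summable fun i => ‖χ i‖ ^ 2) : Summable fun i => φ i * conj (χ i) :=
  summable_mul_of_summable_sq_norm hφ (by simpa using hχ)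

lemma tsum_mul_le_sqrt_mul_sqrt {f g : α → ℝ} (hf : ∀ i, 0 ≤ f i) (hg : ∀ i, 0 ≤ g i)
    (hf2 : Summable fun i => f i ^ 2) (hg2 : Summable fun i => g i ^ 2) :
    ∑' i, f i * g i ≤ √(∑' i, f i ^ 2) * √(∑' i, g i ^ 2) := by
  simp only [← Real.rpow_two, Real.sqrt_eq_rpow] at hf2 hg2 ⊢
  exact Real.inner_le_Lp_mul_Lq_tsum_of_nonneg Real.HolderConjugate.two_two hf hg hf2 hg2

end SquareSummable

section Agmon

variable {E : Type*} [SeminormedAddCommGroup E] {F : ℤ → E}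

-- `‖DF‖²`, with `D` the forward difference.
noncomputable def kineticEnergy (F : ℤ → E) : ℝ := ∑' m, ‖Δ_[1] F m‖ ^ 2

lemma summable_sq_norm_comp_add_one (hF : Summable fun m => ‖F m‖ ^ 2) :
    Summable fun m => ‖F (m + 1)‖ ^ 2 :=
  hF.comp_injective (add_left_injective 1)

lemma tsum_sq_norm_comp_add_one : ∑' m, ‖F (m + 1)‖ ^ 2 = ∑' m, ‖F m‖ ^ 2 :=
  (Equiv.addRight 1).tsum_eq fun m => ‖F m‖ ^ 2

lemma summable_sq_norm_fwdDiff (hF : Summable fun m => ‖F m‖ ^ 2) :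
    Summable fun m => ‖Δ_[1] F m‖ ^ 2 := by
  refine Summable.of_nonneg_of_le (fun _ => sq_nonneg _) (fun m => ?_)
    (((summable_sq_norm_comp_add_one hF).add hF).mul_left 2)
  change ‖F (m + 1) - F m‖ ^ 2 ≤ _
  have := norm_sub_le (F (m + 1)) (F m)
  nlinarith [sq_nonneg (‖F (m + 1)‖ - ‖F m‖), norm_nonneg (F (m + 1) - F m)]

-- Telescope `‖F‖²` from `n` towards `+∞` and towards `-∞` simultaneously.
lemma two_mul_sq_norm_le_tsum (hF : Summable fun m => ‖F m‖ ^ 2) (n : ℤ) :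
    2 * ‖F n‖ ^ 2 ≤ ∑' m, ‖Δ_[1] F m‖ * (‖F (m + 1)‖ + ‖F m‖) := by
  have hΔ : Summable fun m => ‖‖Δ_[1] F m‖‖ ^ 2 := by simpa using summable_sq_norm_fwdDiff hF
  have hh : Summable fun m => ‖Δ_[1] F m‖ * (‖F (m + 1)‖ + ‖F m‖) := by
    simp only [mul_add]
    exact (summable_mul_of_summable_sq_norm hΔ
      (by simpa using summable_sq_norm_comp_add_one hF)).add
      (summable_mul_of_summable_sq_norm hΔ (by simpa using hF))
  set h : ℤ → ℝ := fun m => ‖Δ_[1] F m‖ * (‖F (m + 1)‖ + ‖F m‖)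
  have step (m : ℤ) : |‖F (m + 1)‖ ^ 2 - ‖F m‖ ^ 2| ≤ h m :=
    abs_sq_norm_sub_sq_norm_le (F (m + 1)) (F m)
  have hu : Tendsto (fun i : ℕ => ‖F (n + i)‖ ^ 2 + ‖F (n - i)‖ ^ 2) atTop (𝓝 0) := by
    have hright := hF.comp_injective ((add_right_injective n).comp Nat.cast_injective)
    have hleft := hF.comp_injective ((sub_right_injective (b := n)).comp Nat.cast_injective)
    simpa using hright.tendsto_atTop_zero.add hleft.tendsto_atTop_zero
  have hshift : HasSum (fun m => h (n + m)) (∑' m, h m) :=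
    (Equiv.addLeft n).hasSum_iff.mpr hh.hasSum
  have key := le_of_hasSum_of_sub_succ_le hu hshift.nat_add_neg_add_one fun i => by
    have hr := abs_le.mp (step (n + i))
    rw [add_assoc] at hr
    have hl := abs_le.mp (step (n + -(i + 1)))
    rw [show n + -((i : ℤ) + 1) + 1 = n - i by ring] at hl
    push_cast
    rw [show n - ((i : ℤ) + 1) = n + -((i : ℤ) + 1) by ring]
    linarith [hr.1, hl.2]
  simpa [two_mul] using key

/-- Discrete Agmon inequality. -/
theorem sq_norm_le_sqrt_mul_sqrt (hF : Summable fun m => ‖F m‖ ^ 2) (n : ℤ) :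
    ‖F n‖ ^ 2 ≤ √(∑' m, ‖F m‖ ^ 2) * √(kineticEnergy F) := by
  have hΔ := summable_sq_norm_fwdDiff hF
  have hΔ' : Summable fun m => ‖‖Δ_[1] F m‖‖ ^ 2 := by simpa using hΔ
  have hsum₁ : Summable fun m => ‖Δ_[1] F m‖ * ‖F (m + 1)‖ :=
    summable_mul_of_summable_sq_norm hΔ' (by simpa using summable_sq_norm_comp_add_one hF)
  have hsum₂ : Summable fun m => ‖Δ_[1] F m‖ * ‖F m‖ :=
    summable_mul_of_summable_sq_norm hΔ' (by simpa using hF)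
  have hle₁ := tsum_mul_le_sqrt_mul_sqrt (f := fun m => ‖Δ_[1] F m‖) (g := fun m => ‖F (m + 1)‖)
    (fun _ => norm_nonneg _) (fun _ => norm_nonneg _) hΔ (summable_sq_norm_comp_add_one hF)
  have hle₂ := tsum_mul_le_sqrt_mul_sqrt (f := fun m => ‖Δ_[1] F m‖) (g := fun m => ‖F m‖)
    (fun _ => norm_nonneg _) (fun _ => norm_nonneg _) hΔ hF
  rw [tsum_sq_norm_comp_add_one] at hle₁
  have htele := two_mul_sq_norm_le_tsum hF n
  simp only [mul_add] at htele
  rw [hsum₁.tsum_add hsum₂] at htele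
  rw [kineticEnergy]
  linarith

end Agmon

section Laplacian

variable {φ : ℤ → ℂ}

lemma hasSum_laplacian_mul_conj (hφ : Summable fun n => ‖φ n‖ ^ 2) :
    HasSum (fun n => (2 * φ n - φ (n + 1) - φ (n - 1)) * conj (φ n)) (kineticEnergy φ : ℂ) := by
  have hP := summable_mul_conj (summable_sq_norm_fwdDiff hφ) (summable_sq_norm_comp_add_one hφ)
  have hQ := summable_mul_conj (summable_sq_norm_fwdDiff hφ) hφ
  have hP' : HasSum (fun n => Δ_[1] φ (n - 1) * conj (φ (n - 1 + 1))) _ :=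
    (Equiv.subRight (1 : ℤ)).hasSum_iff.mpr hP.hasSum
  have hterm (n : ℤ) : (2 * φ n - φ (n + 1) - φ (n - 1)) * conj (φ n) =
      Δ_[1] φ (n - 1) * conj (φ (n - 1 + 1)) - Δ_[1] φ n * conj (φ n) := by
    simp only [fwdDiff, sub_add_cancel]
    ring
  have hsum : ∑' n, Δ_[1] φ n * conj (φ (n + 1)) - ∑' n, Δ_[1] φ n * conj (φ n) =
      (kineticEnergy φ : ℂ) := by
    rw [kineticEnergy, Complex.ofReal_tsum, ← hP.tsum_sub hQ]
    refine tsum_congr fun n => ?_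
    rw [← mul_sub, ← map_sub]
    change Δ_[1] φ n * conj (Δ_[1] φ n) = _
    rw [Complex.mul_conj']
    push_cast
    rfl
  rw [← hsum]
  exact (hP'.sub hQ.hasSum).congr_fun hterm

lemma hasSum_mul_sq_norm_of_eigen {b : ℤ → ℝ} {e : ℝ} (hφ : Summable fun n => ‖φ n‖ ^ 2)
    (heig : ∀ n, (2 * φ n - φ (n + 1) - φ (n - 1)) - (b n : ℂ) * φ n = -(e : ℂ) * φ n) :
    HasSum (fun n => b n * ‖φ n‖ ^ 2) (kineticEnergy φ + e * ∑' n, ‖φ n‖ ^ 2) := by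
  have hkin : HasSum (fun n => (b n - e) * ‖φ n‖ ^ 2) (kineticEnergy φ) := by
    refine (Complex.hasSum_ofReal).mp ((hasSum_laplacian_mul_conj hφ).congr_fun fun n => ?_)
    rw [show 2 * φ n - φ (n + 1) - φ (n - 1) = (b n - e) * φ n by linear_combination heig n,
      mul_assoc, Complex.mul_conj']
    push_cast
    rfl
  convert hkin.add (hφ.hasSum.mul_left e) using 2
  ring

end Laplacian

section DensityMatrix

lemma hasSum_sq_norm_sum_mul_conj {α ι : Type*} [Fintype ι] (v : ι → ℂ) {φ : ι → α → ℂ}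
    (hφ : ∀ j, Summable fun m => ‖φ j m‖ ^ 2) :
    HasSum (fun m => ((‖∑ j, v j * conj (φ j m)‖ ^ 2 : ℝ) : ℂ))
      (∑ j, ∑ k, v j * conj (v k) * ∑' m, φ k m * conj (φ j m)) := by
  have hexpand (m : α) : ((‖∑ j, v j * conj (φ j m)‖ ^ 2 : ℝ) : ℂ) =
      ∑ j, ∑ k, v j * conj (v k) * (φ k m * conj (φ j m)) := by
    rw [Complex.ofReal_pow, ← Complex.mul_conj', map_sum, Finset.sum_mul_sum]
    refine Finset.sum_congr rfl fun j _ => Finset.sum_congr rfl fun k _ => ?_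
    simp only [map_mul, Complex.conj_conj]
    ring
  simp only [hexpand]
  exact hasSum_sum fun j _ => hasSum_sum fun k _ =>
    (summable_mul_conj (hφ k) (hφ j)).hasSum.mul_left _

lemma tsum_sq_norm_eq_one {α : Type*} {φ : α → ℂ} (h : ∑' n, φ n * conj (φ n) = 1) :
    ∑' n, ‖φ n‖ ^ 2 = 1 := by
  simp only [Complex.mul_conj', ← Complex.ofReal_pow, ← Complex.ofReal_tsum] at h
  exact_mod_cast h

variable {ι : Type*} [Fintype ι] (ψ : ι → ℤ → ℂ)

noncomputable def density (n : ℤ) : ℝ := ∑ j, ‖ψ j n‖ ^ 2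

def densityMatrix (n m : ℤ) : ℂ := ∑ j, ψ j n * conj (ψ j m)

lemma density_nonneg (n : ℤ) : 0 ≤ density ψ n :=
  Finset.sum_nonneg fun _ _ => sq_nonneg _

lemma densityMatrix_self (n : ℤ) : densityMatrix ψ n n = density ψ n := by
  simp only [densityMatrix, density, Complex.mul_conj', Complex.ofReal_sum, Complex.ofReal_pow]

variable {ψ}

lemma hasSum_sq_norm_densityMatrix [DecidableEq ι] (hl2 : ∀ j, Summable fun n => ‖ψ j n‖ ^ 2)
    (horth : ∀ j k, ∑' n, ψ j n * conj (ψ k n) = if j = k then 1 else 0) (n : ℤ) :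
    HasSum (fun m => ‖densityMatrix ψ n m‖ ^ 2) (density ψ n) := by
  have h := hasSum_sq_norm_sum_mul_conj (fun j => ψ j n) hl2
  simp only [horth, mul_ite, mul_one, mul_zero, Finset.sum_ite_eq', Finset.mem_univ, if_true] at h
  rw [← Complex.hasSum_ofReal, ← densityMatrix_self]
  exact h

lemma density_pow_three_le_kineticEnergy [DecidableEq ι]
    (hl2 : ∀ j, Summable fun n => ‖ψ j n‖ ^ 2)
    (horth : ∀ j k, ∑' n, ψ j n * conj (ψ k n) = if j = k then 1 else 0) (n : ℤ) :
    density ψ n ^ 3 ≤ kineticEnergy (densityMatrix ψ n) := by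
  have hγ := hasSum_sq_norm_densityMatrix hl2 horth n
  have hagmon := sq_norm_le_sqrt_mul_sqrt hγ.summable n
  have hρ := density_nonneg ψ n
  have hK : 0 ≤ kineticEnergy (densityMatrix ψ n) := tsum_nonneg fun _ => sq_nonneg _
  rw [hγ.tsum_eq, densityMatrix_self, Complex.norm_real, Real.norm_of_nonneg hρ] at hagmon
  have h4 : density ψ n * density ψ n ^ 3 ≤ density ψ n * kineticEnergy (densityMatrix ψ n) := by
    calc density ψ n * density ψ n ^ 3 = (density ψ n ^ 2) ^ 2 := by ring
      _ ≤ (√(density ψ n) * √(kineticEnergy (densityMatrix ψ n))) ^ 2 :=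
        pow_le_pow_left₀ (sq_nonneg _) hagmon 2
      _ = density ψ n * kineticEnergy (densityMatrix ψ n) := by
        rw [mul_pow, Real.sq_sqrt hρ, Real.sq_sqrt hK]
  rcases hρ.eq_or_lt with h0 | hpos
  · rw [← h0]
    simpa using hK
  · exact le_of_mul_le_mul_left h4 hpos

lemma hasSum_kineticEnergy_densityMatrix [DecidableEq ι]
    (hl2 : ∀ j, Summable fun n => ‖ψ j n‖ ^ 2)
    (horth : ∀ j k, ∑' n, ψ j n * conj (ψ k n) = if j = k then 1 else 0) :
    HasSum (fun n => kineticEnergy (densityMatrix ψ n)) (∑ j, kineticEnergy (ψ j)) := by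
  set G : ι → ι → ℂ := fun k j => ∑' m, Δ_[1] (ψ k) m * conj (Δ_[1] (ψ j) m)
  have hdiff (n m : ℤ) : Δ_[1] (densityMatrix ψ n) m = ∑ j, ψ j n * conj (Δ_[1] (ψ j) m) := by
    simp only [fwdDiff, densityMatrix, map_sub, mul_sub, Finset.sum_sub_distrib]
  have hpoint (n : ℤ) : (kineticEnergy (densityMatrix ψ n) : ℂ) =
      ∑ j, ∑ k, ψ j n * conj (ψ k n) * G k j := by
    rw [kineticEnergy, Complex.ofReal_tsum]
    simp only [hdiff]
    exact (hasSum_sq_norm_sum_mul_conj (fun j => ψ j n)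
      (fun j => summable_sq_norm_fwdDiff (hl2 j))).tsum_eq
  have hdiag (j : ι) : G j j = kineticEnergy (ψ j) := by
    simp only [G, kineticEnergy, Complex.mul_conj', Complex.ofReal_tsum, Complex.ofReal_pow]
  have htotal : ((∑ j, kineticEnergy (ψ j) : ℝ) : ℂ) =
      ∑ j, ∑ k, (∑' n, ψ j n * conj (ψ k n)) * G k j := by
    simp only [horth, ite_mul, one_mul, zero_mul, Finset.sum_ite_eq, Finset.mem_univ, if_true,
      hdiag, Complex.ofReal_sum]
  rw [← Complex.hasSum_ofReal, htotal]
  exact (hasSum_sum fun j _ => hasSum_sum fun k _ =>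
    (summable_mul_conj (hl2 j) (hl2 k)).hasSum.mul_right (G k j)).congr_fun hpoint

theorem summable_and_tsum_density_pow_three_le [DecidableEq ι]
    (hl2 : ∀ j, Summable fun n => ‖ψ j n‖ ^ 2)
    (horth : ∀ j k, ∑' n, ψ j n * conj (ψ k n) = if j = k then 1 else 0) :
    Summable (fun n => density ψ n ^ 3) ∧ ∑' n, density ψ n ^ 3 ≤ ∑ j, kineticEnergy (ψ j) := by
  have hK := hasSum_kineticEnergy_densityMatrix hl2 horth
  have hle := density_pow_three_le_kineticEnergy hl2 horth
  have hs := Summable.of_nonneg_of_le (fun n => pow_nonneg (density_nonneg ψ n) 3) hle hK.summable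
  exact ⟨hs, hK.tsum_eq ▸ hs.tsum_le_tsum hle hK.summable⟩

end DensityMatrix

lemma tsum_mul_le_three_halves_mul_three_of_nonneg {α : Type*} {f g : α → ℝ}
    (hf : ∀ i, 0 ≤ f i) (hg : ∀ i, 0 ≤ g i) (hf_sum : Summable fun i => f i ^ (3 / 2 : ℝ))
    (hg_sum : Summable fun i => g i ^ 3) :
    ∑' i, f i * g i ≤
      (∑' i, f i ^ (3 / 2 : ℝ)) ^ ((2 : ℝ) / 3) * (∑' i, g i ^ 3) ^ ((1 : ℝ) / 3) := by
  have hpq : (3 / 2 : ℝ).HolderConjugate 3 :=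
    Real.holderConjugate_iff.mpr ⟨by norm_num, by norm_num⟩
  simp only [← Real.rpow_ofNat] at hg_sum ⊢
  convert Real.inner_le_Lp_mul_Lq_tsum_of_nonneg hpq hf hg hf_sum hg_sum using 3
  norm_num

end DiscreteLiebThirring

open DiscreteLiebThirring in
theorem stmt_14_general
    (b : ℤ → ℝ) (hb0 : ∀ n, 0 ≤ b n)
    (hb : Summable fun n : ℤ => b n ^ (3 / 2 : ℝ))
    (N : ℕ) (ψ : Fin N → ℤ → ℂ) (e : Fin N → ℝ)
    (hl2 : ∀ j, Summable fun n : ℤ => ‖ψ j n‖ ^ 2)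
    (horth : ∀ j k, (∑' n : ℤ, ψ j n * (starRingEnd ℂ) (ψ k n)) = if j = k then 1 else 0)
    (heig : ∀ j, ∀ n : ℤ,
      (2 * ψ j n - ψ j (n + 1) - ψ j (n - 1)) - (b n : ℂ) * ψ j n = -(e j : ℂ) * ψ j n) :
    let X : ℝ := (∑' n : ℤ, (∑ j : Fin N, ‖ψ j n‖ ^ 2) ^ 3) ^ ((1 : ℝ) / 3)
    X ^ 3 - (∑' n : ℤ, b n ^ (3 / 2 : ℝ)) ^ ((2 : ℝ) / 3) * X ≤ -∑ j : Fin N, e j := by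
  intro X
  have hX : X = (∑' n, density ψ n ^ 3) ^ ((1 : ℝ) / 3) := rfl
  have hbψ (j : Fin N) : HasSum (fun n => b n * ‖ψ j n‖ ^ 2) (kineticEnergy (ψ j) + e j) := by
    simpa [tsum_sq_norm_eq_one (by simpa using horth j j)] using
      hasSum_mul_sq_norm_of_eigen (hl2 j) (heig j)
  have hbρ : HasSum (fun n => b n * density ψ n) (∑ j, (kineticEnergy (ψ j) + e j)) := by
    simpa only [density, Finset.mul_sum] using hasSum_sum fun j _ => hbψ j
  obtain ⟨hρ3, hkin⟩ := summable_and_tsum_density_pow_three_le hl2 horth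
  have hholder := tsum_mul_le_three_halves_mul_three_of_nonneg hb0 (density_nonneg ψ) hb hρ3
  have hX3 : X ^ 3 = ∑' n, density ψ n ^ 3 := by
    rw [hX, one_div]
    exact_mod_cast Real.rpow_inv_natCast_pow
      (tsum_nonneg fun n => pow_nonneg (density_nonneg ψ n) 3) three_ne_zero
  rw [hbρ.tsum_eq, Finset.sum_add_distrib, ← hX] at hholder
  linarith

theorem stmt_14
    (b : ℤ → ℝ) (hb0 : ∀ n, 0 ≤ b n)
    (hb : Summable fun n : ℤ => b n ^ (3 / 2 : ℝ))
    (N : ℕ) (ψ : Fin N → ℤ → ℂ) (e : Fin N → ℝ)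
    (he : ∀ j, 0 < e j)
    (hl2 : ∀ j, Summable fun n : ℤ => ‖ψ j n‖ ^ 2)
    (horth : ∀ j k, (∑' n : ℤ, ψ j n * (starRingEnd ℂ) (ψ k n)) = if j = k then 1 else 0)
    (heig : ∀ j, ∀ n : ℤ,
      (2 * ψ j n - ψ j (n + 1) - ψ j (n - 1)) - (b n : ℂ) * ψ j n = -(e j : ℂ) * ψ j n) :
    let X : ℝ := (∑' n : ℤ, (∑ j : Fin N, ‖ψ j n‖ ^ 2) ^ 3) ^ ((1 : ℝ) / 3)
    X ^ 3 - (∑' n : ℤ, b n ^ (3 / 2 : ℝ)) ^ ((2 : ℝ) / 3) * X ≤ -∑ j : Fin N, e j :=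
  stmt_14_general b hb0 hb N ψ e hl2 horth heig
end
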